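/- arXiv:1305.6605 — 3 statements merged into one kernel-verified Lean document; each statement's English description precedes it below -/
import Mathlib

section
/- K(r) is asymptotically equivalent to (1/2)·ln(1/(1-r)) as r → 1⁻; that is, K(r) / ((1/2)·ln(1/(1-r))) → 1 as r → 1⁻. -/
/-!
On `[0, 1]` the integrand `f ξ = 1 / √((1 - ξ²)(1 - r²ξ²))` satisfies `ξ f ξ ≤ f ξ ≤ ξ f ξ + 1`,
and `ξ f ξ` has the elementary primitive `-log (r √(1 - ξ²) + √(1 - r²ξ²)) / r` (substitute
`u = ξ²`), so `∫₀¹ ξ f ξ dξ = log ((1 + r) / (1 - r)) / (2r)`. Hence `K(r)` stays within bounded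
distance of `½ log (1 / (1 - r))`, which tends to infinity as `r → 1⁻`.
-/

open Real Filter Set Topology

noncomputable def ellK (r : ℝ) : ℝ :=
  ∫ ξ in (0:ℝ)..1, 1 / Real.sqrt ((1 - ξ ^ 2) * (1 - r ^ 2 * ξ ^ 2))

open MeasureTheory intervalIntegral

section
variable {r x : ℝ}

lemma hasDerivAt_neg_log_sqrt_add_sqrt_div (hr0 : 0 < r) (hr1 : r ≤ 1) (hx : x ^ 2 < 1) :
    HasDerivAt (fun ξ => -log (r * √(1 - ξ ^ 2) + √(1 - r ^ 2 * ξ ^ 2)) / r)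
      (x / √((1 - x ^ 2) * (1 - r ^ 2 * x ^ 2))) x := by
  have hA : 0 < 1 - x ^ 2 := by linarith
  have hB : 0 < 1 - r ^ 2 * x ^ 2 := by
    nlinarith [mul_le_of_le_one_left (sq_nonneg x) (pow_le_one₀ hr0.le hr1 : r ^ 2 ≤ 1)]
  have hu : 0 < r * √(1 - x ^ 2) + √(1 - r ^ 2 * x ^ 2) := by positivity
  have du := ((((hasDerivAt_pow 2 x).const_sub 1).sqrt hA.ne').const_mul r).add
    ((((hasDerivAt_pow 2 x).const_mul (r ^ 2)).const_sub 1).sqrt hB.ne')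
  refine (((du.log hu.ne').neg).div_const r).congr_deriv ?_
  simp only [Pi.add_apply, Nat.cast_ofNat, Nat.add_one_sub_one, pow_one]
  rw [sqrt_mul hA.le]
  field_simp
  ring

lemma continuousOn_neg_log_sqrt_add_sqrt_div (hr0 : 0 < r) (hr1 : r < 1) :
    ContinuousOn (fun ξ => -log (r * √(1 - ξ ^ 2) + √(1 - r ^ 2 * ξ ^ 2)) / r) (Icc 0 1) := by
  have hu : ∀ ξ ∈ Icc (0:ℝ) 1, r * √(1 - ξ ^ 2) + √(1 - r ^ 2 * ξ ^ 2) ≠ 0 := fun ξ hξ => by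
    have : 0 < 1 - r ^ 2 * ξ ^ 2 := by
      nlinarith [mul_le_of_le_one_right (sq_nonneg r) (pow_le_one₀ (n := 2) hξ.1 hξ.2)]
    positivity
  exact ((ContinuousOn.log (by fun_prop) hu).neg).div_const r

lemma intervalIntegrable_div_sqrt (hr0 : 0 < r) (hr1 : r < 1) :
    IntervalIntegrable (fun ξ => ξ / √((1 - ξ ^ 2) * (1 - r ^ 2 * ξ ^ 2))) volume 0 1 := by
  refine intervalIntegrable_deriv_of_nonneg
    (by simpa using continuousOn_neg_log_sqrt_add_sqrt_div hr0 hr1)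
    (fun ξ hξ => ?_) (fun ξ hξ => ?_)
  · simp only [zero_le_one, min_eq_left, max_eq_right, mem_Ioo] at hξ
    exact hasDerivAt_neg_log_sqrt_add_sqrt_div hr0 hr1.le (by nlinarith)
  · simp only [zero_le_one, min_eq_left, max_eq_right, mem_Ioo] at hξ
    exact div_nonneg hξ.1.le (sqrt_nonneg _)

lemma integral_div_sqrt (hr0 : 0 < r) (hr1 : r < 1) :
    ∫ ξ in (0:ℝ)..1, ξ / √((1 - ξ ^ 2) * (1 - r ^ 2 * ξ ^ 2)) =
      log ((1 + r) / (1 - r)) / (2 * r) := by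
  rw [integral_eq_sub_of_hasDerivAt_of_le zero_le_one
    (continuousOn_neg_log_sqrt_add_sqrt_div hr0 hr1)
    (fun ξ hξ => hasDerivAt_neg_log_sqrt_add_sqrt_div hr0 hr1.le (by nlinarith [hξ.1, hξ.2]))
    (intervalIntegrable_div_sqrt hr0 hr1)]
  have h1r : 0 < 1 - r := by linarith
  simp only [one_pow, sub_self, sqrt_zero, mul_zero, zero_add, mul_one, ne_eq, OfNat.ofNat_ne_zero,
    not_false_eq_true, zero_pow, sub_zero, sqrt_one]
  rw [log_sqrt (by nlinarith), log_div (by positivity) h1r.ne',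
    show 1 - r ^ 2 = (1 - r) * (1 + r) by ring, log_mul h1r.ne' (by positivity), add_comm r 1]
  field_simp
  ring

lemma one_div_sqrt_le_div_sqrt_add_one (hr : r ^ 2 ≤ 1) (hx : x ∈ Icc (0:ℝ) 1) :
    1 / √((1 - x ^ 2) * (1 - r ^ 2 * x ^ 2)) ≤ x / √((1 - x ^ 2) * (1 - r ^ 2 * x ^ 2)) + 1 := by
  obtain ⟨hx0, hx1⟩ := hx
  have hsq : (1 - x) ^ 2 ≤ (1 - x ^ 2) * (1 - r ^ 2 * x ^ 2) :=
    calc (1 - x) ^ 2 ≤ (1 - x) ^ 2 * (1 + x) ^ 2 :=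
          le_mul_of_one_le_right (sq_nonneg _) (by nlinarith)
      _ = (1 - x ^ 2) * (1 - x ^ 2) := by ring
      _ ≤ (1 - x ^ 2) * (1 - r ^ 2 * x ^ 2) :=
        mul_le_mul_of_nonneg_left (by nlinarith [mul_le_of_le_one_left (sq_nonneg x) hr])
          (by nlinarith)
  have hle : 1 - x ≤ √((1 - x ^ 2) * (1 - r ^ 2 * x ^ 2)) :=
    (le_abs_self _).trans (abs_le_sqrt hsq)
  rw [← sub_le_iff_le_add', ← sub_div]
  exact div_le_one_of_le₀ hle (sqrt_nonneg _)

lemma intervalIntegrable_one_div_sqrt (hr0 : 0 < r) (hr1 : r < 1) :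
    IntervalIntegrable (fun ξ => 1 / √((1 - ξ ^ 2) * (1 - r ^ 2 * ξ ^ 2))) volume 0 1 := by
  refine ((intervalIntegrable_div_sqrt hr0 hr1).add (intervalIntegrable_const (c := 1))).mono_fun
    (by measurability) ((ae_restrict_mem measurableSet_uIoc).mono fun ξ hξ => ?_)
  rw [uIoc_of_le zero_le_one] at hξ
  have hbound :=
    one_div_sqrt_le_div_sqrt_add_one (pow_le_one₀ hr0.le hr1.le) (Ioc_subset_Icc_self hξ)
  dsimp only
  rw [norm_of_nonneg (by positivity)]
  exact hbound.trans (le_norm_self _)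

lemma log_div_le_ellK (hr0 : 0 < r) (hr1 : r < 1) :
    log ((1 + r) / (1 - r)) / (2 * r) ≤ ellK r := by
  rw [← integral_div_sqrt hr0 hr1]
  refine integral_mono_on zero_le_one (intervalIntegrable_div_sqrt hr0 hr1)
    (intervalIntegrable_one_div_sqrt hr0 hr1) fun ξ hξ => ?_
  exact div_le_div_of_nonneg_right hξ.2 (sqrt_nonneg _)

lemma ellK_le_log_div_add_one (hr0 : 0 < r) (hr1 : r < 1) :
    ellK r ≤ log ((1 + r) / (1 - r)) / (2 * r) + 1 := by
  have hint := intervalIntegrable_div_sqrt hr0 hr1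
  calc ellK r ≤ ∫ ξ in (0:ℝ)..1, (ξ / √((1 - ξ ^ 2) * (1 - r ^ 2 * ξ ^ 2)) + 1) :=
        integral_mono_on zero_le_one (intervalIntegrable_one_div_sqrt hr0 hr1)
          (hint.add intervalIntegrable_const)
          fun ξ hξ => one_div_sqrt_le_div_sqrt_add_one (pow_le_one₀ hr0.le hr1.le) hξ
    _ = log ((1 + r) / (1 - r)) / (2 * r) + 1 := by
        rw [integral_add hint intervalIntegrable_const, integral_div_sqrt hr0 hr1]
        simp

lemma log_div_eq_log_add_log_one_div (hr₁ : r ≠ -1) (hr₂ : r ≠ 1) :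
    log ((1 + r) / (1 - r)) = log (1 + r) + log (1 / (1 - r)) := by
  rw [div_eq_mul_one_div, log_mul (by contrapose! hr₁; linarith)
    (one_div_ne_zero (sub_ne_zero.2 hr₂.symm))]

lemma half_log_le_log_div (hr0 : 0 < r) (hr1 : r < 1) :
    1 / 2 * log (1 / (1 - r)) ≤ log ((1 + r) / (1 - r)) / (2 * r) := by
  have hL : 0 ≤ log (1 / (1 - r)) := log_nonneg (by rw [le_div_iff₀] <;> linarith)
  rw [log_div_eq_log_add_log_one_div (by linarith : -1 < r).ne' hr1.ne, le_div_iff₀ (by positivity)]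
  nlinarith [log_nonneg (by linarith : (1:ℝ) ≤ 1 + r)]

lemma log_div_le_half_log_add_one (hr0 : 0 < r) (hr1 : r < 1) :
    log ((1 + r) / (1 - r)) / (2 * r) ≤ 1 / 2 * log (1 / (1 - r)) + 1 := by
  have h1r : 0 < 1 - r := by linarith
  have hlog : log (1 + r) ≤ r := by linarith [log_le_sub_one_of_pos (by linarith : 0 < 1 + r)]
  have hL : (1 - r) * log (1 / (1 - r)) ≤ r := by
    have := log_le_sub_one_of_pos (one_div_pos.2 h1r)
    calc (1 - r) * log (1 / (1 - r)) ≤ (1 - r) * (1 / (1 - r) - 1) :=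
          mul_le_mul_of_nonneg_left this h1r.le
      _ = r := by field_simp; ring
  rw [log_div_eq_log_add_log_one_div (by linarith : -1 < r).ne' hr1.ne, div_le_iff₀ (by positivity)]
  nlinarith

end

lemma tendsto_div_of_abs_sub_le {α : Type*} {l : Filter α} {f g : α → ℝ} {C : ℝ}
    (hg : Tendsto g l atTop) (hfg : ∀ᶠ x in l, |f x - g x| ≤ C) :
    Tendsto (fun x => f x / g x) l (𝓝 1) := by
  have hsub : (f - g) =o[l] g :=
    (Asymptotics.IsBigO.of_bound C (by simpa using hfg)).trans_isLittleO
      ((Asymptotics.isLittleO_one_left_iff ℝ).2 (tendsto_norm_atTop_atTop.comp hg))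
  exact (Asymptotics.isEquivalent_iff_tendsto_one (hg.eventually_ne_atTop 0)).1 hsub

lemma tendsto_log_one_div_one_sub_nhdsLT :
    Tendsto (fun r => log (1 / (1 - r))) (𝓝[<] (1:ℝ)) atTop := by
  have h : Tendsto (fun r : ℝ => 1 - r) (𝓝[<] 1) (𝓝[>] 0) := tendsto_nhdsWithin_iff.2
    ⟨((continuous_const.sub continuous_id).tendsto' (1:ℝ) 0 (by simp)).mono_left
      nhdsWithin_le_nhds, eventually_nhdsWithin_of_forall fun _ hr => mem_Ioi.2 (sub_pos.2 hr)⟩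
  simpa only [one_div, log_inv, Function.comp_def] using
    tendsto_neg_atBot_atTop.comp (tendsto_log_nhdsGT_zero.comp h)

theorem ellK_asymp_one :
    Tendsto (fun r : ℝ => ellK r / ((1 / 2) * Real.log (1 / (1 - r))))
      (nhdsWithin 1 (Set.Iio (1:ℝ))) (nhds 1) := by
  refine tendsto_div_of_abs_sub_le (C := 2)
    (tendsto_log_one_div_one_sub_nhdsLT.const_mul_atTop one_half_pos) ?_
  filter_upwards [Ioo_mem_nhdsLT zero_lt_one] with r ⟨hr0, hr1⟩
  rw [abs_le]
  constructor <;> linarith [half_log_le_log_div hr0 hr1, log_div_le_ellK hr0 hr1,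
    ellK_le_log_div_add_one hr0 hr1, log_div_le_half_log_add_one hr0 hr1]
end

section
/- K(r')/K(r) is asymptotically equivalent to (2/π)·ln(1/r) as r → 0⁺, i.e., the ratio of the two quantities tends to 1. -/
open Real Filter Set Topology

/-!
As `r → 0` the integrand of `K(r)` tends to `1/√(1-ξ²)`, so `K(r) → π/2`. For the
complementary modulus `k = r'`, split `K(k) = ∫ ξ f + ∫ (1 - ξ) f` with `f` the integrand.
The weight `ξ` makes the first integral elementary, equal to `(log (1 + k) - log r) / k`,
while `(1 - ξ) f ≤ 1/(1 + ξ) ≤ 1` bounds the second by `1`. Hence `K(r') = log (1/r) + O(1)`.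
-/

open MeasureTheory intervalIntegral

theorem intervalIntegrable_deriv_of_nonneg_of_le {f f' : ℝ → ℝ} {a b : ℝ} (hab : a ≤ b)
    (hcont : ContinuousOn f (Icc a b)) (hderiv : ∀ x ∈ Ioo a b, HasDerivAt f (f' x) x)
    (hpos : ∀ x ∈ Ioo a b, 0 ≤ f' x) : IntervalIntegrable f' volume a b :=
  (intervalIntegrable_iff_integrableOn_Ioc_of_le hab).2
    (integrableOn_deriv_of_nonneg hcont hderiv hpos)

lemma intervalIntegrable_one_div_sqrt_one_sub_sq :
    IntervalIntegrable (fun x : ℝ => 1 / √(1 - x ^ 2)) volume 0 1 :=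
  intervalIntegrable_deriv_of_nonneg_of_le zero_le_one continuous_arcsin.continuousOn
    (fun _ hx => hasDerivAt_arcsin (by linarith [hx.1]) hx.2.ne) (fun _ _ => by positivity)

lemma integral_one_div_sqrt_one_sub_sq : ∫ x in (0:ℝ)..1, 1 / √(1 - x ^ 2) = π / 2 := by
  rw [integral_eq_sub_of_hasDerivAt_of_le zero_le_one continuous_arcsin.continuousOn
    (fun _ hx => hasDerivAt_arcsin (by linarith [hx.1]) hx.2.ne)
    intervalIntegrable_one_div_sqrt_one_sub_sq, arcsin_one, arcsin_zero, sub_zero]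

noncomputable def ellKIntegrand (k ξ : ℝ) : ℝ := 1 / √((1 - ξ ^ 2) * (1 - k ^ 2 * ξ ^ 2))

lemma ellK_eq_integral (k : ℝ) : ellK k = ∫ ξ in (0:ℝ)..1, ellKIntegrand k ξ := rfl

lemma ellKIntegrand_nonneg (k ξ : ℝ) : 0 ≤ ellKIntegrand k ξ := by
  unfold ellKIntegrand; positivity

lemma measurable_ellKIntegrand (k : ℝ) : Measurable (ellKIntegrand k) := by
  unfold ellKIntegrand; fun_prop

lemma ellKIntegrand_zero (ξ : ℝ) : ellKIntegrand 0 ξ = 1 / √(1 - ξ ^ 2) := by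
  simp [ellKIntegrand]

lemma ellKIntegrand_one (k : ℝ) : ellKIntegrand k 1 = 0 := by
  simp [ellKIntegrand]

lemma ellKIntegrand_eq (k : ℝ) {ξ : ℝ} (hξ : ξ ^ 2 ≤ 1) :
    ellKIntegrand k ξ = 1 / (√(1 - ξ ^ 2) * √(1 - k ^ 2 * ξ ^ 2)) := by
  rw [ellKIntegrand, sqrt_mul (by linarith)]

section Integrand

variable {k ξ : ℝ}

lemma ellKIntegrand_zero_le (hk : k ^ 2 ≤ 1) (hξ : ξ ∈ Icc (0:ℝ) 1) :
    ellKIntegrand 0 ξ ≤ ellKIntegrand k ξ := by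
  rcases hξ.2.eq_or_lt with rfl | hξ1
  · simp [ellKIntegrand_one]
  have hξ2 : ξ ^ 2 < 1 := by nlinarith [hξ.1]
  rw [ellKIntegrand_zero, ellKIntegrand_eq k hξ2.le]
  gcongr 1 / ?_
  · exact mul_pos (sqrt_pos.2 (by linarith)) (sqrt_pos.2 (by nlinarith))
  · exact mul_le_of_le_one_right (sqrt_nonneg _)
      (sqrt_le_one.2 (by nlinarith [sq_nonneg (k * ξ)]))

lemma ellKIntegrand_le (hk : k ^ 2 < 1) (hξ : ξ ∈ Icc (0:ℝ) 1) :
    ellKIntegrand k ξ ≤ ellKIntegrand 0 ξ / √(1 - k ^ 2) := by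
  rcases hξ.2.eq_or_lt with rfl | hξ1
  · simp [ellKIntegrand_one]
  have hξ2 : ξ ^ 2 < 1 := by nlinarith [hξ.1]
  rw [ellKIntegrand_zero, ellKIntegrand_eq k hξ2.le, div_div]
  have : 0 < 1 - k ^ 2 := by linarith
  gcongr 1 / (_ * √?_)
  nlinarith [sq_nonneg k]

lemma sub_mul_ellKIntegrand_le_one (hk : k ^ 2 ≤ 1) (hξ : ξ ∈ Icc (0:ℝ) 1) :
    (1 - ξ) * ellKIntegrand k ξ ≤ 1 := by
  rcases hξ.2.eq_or_lt with rfl | hξ1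
  · simp
  have hξ2 : ξ ^ 2 < 1 := by nlinarith [hξ.1]
  rw [ellKIntegrand_eq k hξ2.le, mul_one_div, div_le_one (mul_pos (sqrt_pos.2 (by linarith))
    (sqrt_pos.2 (by nlinarith)))]
  calc 1 - ξ ≤ 1 - ξ ^ 2 := by nlinarith [hξ.1]
    _ = √(1 - ξ ^ 2) * √(1 - ξ ^ 2) := (mul_self_sqrt (by linarith)).symm
    _ ≤ √(1 - ξ ^ 2) * √(1 - k ^ 2 * ξ ^ 2) := by gcongr; nlinarith

end Integrand

/-- The substitution `u = 1 - ξ²` turns `∫ ξ * ellKIntegrand k ξ` into the elementary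
`½ ∫ du / √(u (1 - k² + k² u))`. -/
noncomputable def ellKWeightedPrimitive (k ξ : ℝ) : ℝ :=
  -log (k * √(1 - ξ ^ 2) + √(1 - k ^ 2 * ξ ^ 2)) / k

section WeightedIntegral

variable {k : ℝ}

lemma hasDerivAt_ellKWeightedPrimitive (hk0 : 0 < k) (hk1 : k ≤ 1) {ξ : ℝ} (hξ : ξ ^ 2 < 1) :
    HasDerivAt (ellKWeightedPrimitive k) (ξ * ellKIntegrand k ξ) ξ := by
  have hk2 : k ^ 2 ≤ 1 := pow_le_one₀ hk0.le hk1
  have hkξ : 0 < 1 - k ^ 2 * ξ ^ 2 := by nlinarith [mul_le_mul_of_nonneg_right hk2 (sq_nonneg ξ)]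
  have ha : 0 < √(1 - ξ ^ 2) := sqrt_pos.2 (by linarith)
  have hb : 0 < √(1 - k ^ 2 * ξ ^ 2) := sqrt_pos.2 hkξ
  have hd (c : ℝ) : HasDerivAt (fun y : ℝ => 1 - c ^ 2 * y ^ 2) (-(2 * c ^ 2 * ξ)) ξ := by
    refine (((hasDerivAt_pow 2 ξ).const_mul (c ^ 2)).const_sub 1).congr_deriv ?_
    simp only [Nat.cast_ofNat, pow_one, Nat.add_one_sub_one]
    ring
  have hsum := (((hd 1).sqrt (by rw [one_pow, one_mul]; linarith)).const_mul k).fun_add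
    ((hd k).sqrt hkξ.ne')
  simp only [one_pow, one_mul] at hsum
  refine ((hsum.log (by positivity)).neg.div_const k).congr_deriv ?_
  rw [ellKIntegrand_eq k hξ.le]
  field_simp
  ring

lemma continuousOn_ellKWeightedPrimitive (hk0 : 0 ≤ k) (hk1 : k < 1) :
    ContinuousOn (ellKWeightedPrimitive k) (Icc 0 1) := by
  refine (ContinuousOn.log (by fun_prop) fun ξ hξ => ?_).neg.div_const k
  have hkξ : k * ξ < 1 := by nlinarith [hξ.1, hξ.2]
  have : 0 < √(1 - k ^ 2 * ξ ^ 2) := sqrt_pos.2 (by nlinarith [mul_nonneg hk0 hξ.1])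
  positivity

lemma intervalIntegrable_mul_ellKIntegrand (hk0 : 0 < k) (hk1 : k < 1) :
    IntervalIntegrable (fun ξ => ξ * ellKIntegrand k ξ) volume 0 1 :=
  intervalIntegrable_deriv_of_nonneg_of_le zero_le_one
    (continuousOn_ellKWeightedPrimitive hk0.le hk1)
    (fun _ hξ => hasDerivAt_ellKWeightedPrimitive hk0 hk1.le (by nlinarith [hξ.1, hξ.2]))
    (fun ξ hξ => mul_nonneg hξ.1.le (ellKIntegrand_nonneg k ξ))

lemma integral_mul_ellKIntegrand (hk0 : 0 < k) (hk1 : k < 1) :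
    ∫ ξ in (0:ℝ)..1, ξ * ellKIntegrand k ξ = (log (1 + k) - log √(1 - k ^ 2)) / k := by
  rw [integral_eq_sub_of_hasDerivAt_of_le zero_le_one
    (continuousOn_ellKWeightedPrimitive hk0.le hk1)
    (fun _ hξ => hasDerivAt_ellKWeightedPrimitive hk0 hk1.le (by nlinarith [hξ.1, hξ.2]))
    (intervalIntegrable_mul_ellKIntegrand hk0 hk1)]
  simp only [ellKWeightedPrimitive, one_pow, mul_one, sub_self, sqrt_zero, mul_zero, zero_add,
    sub_zero, sqrt_one, ne_eq, OfNat.ofNat_ne_zero, not_false_eq_true, zero_pow,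
    add_comm k 1]
  ring

end WeightedIntegral

section Bounds

variable {k : ℝ}

lemma intervalIntegrable_ellKIntegrand (hk : k ^ 2 < 1) :
    IntervalIntegrable (ellKIntegrand k) volume 0 1 := by
  refine (intervalIntegrable_one_div_sqrt_one_sub_sq.div_const √(1 - k ^ 2)).mono_fun'
    (measurable_ellKIntegrand k).aestronglyMeasurable ?_
  rw [uIoc_of_le zero_le_one]
  filter_upwards [ae_restrict_mem measurableSet_Ioc] with ξ hξ
  rw [norm_of_nonneg (ellKIntegrand_nonneg k ξ), ← ellKIntegrand_zero]
  exact ellKIntegrand_le hk (Ioc_subset_Icc_self hξ)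

lemma pi_div_two_le_ellK (hk : k ^ 2 < 1) : π / 2 ≤ ellK k := by
  rw [← integral_one_div_sqrt_one_sub_sq, ellK_eq_integral]
  refine integral_mono_on zero_le_one intervalIntegrable_one_div_sqrt_one_sub_sq
    (intervalIntegrable_ellKIntegrand hk) fun ξ hξ => ?_
  rw [← ellKIntegrand_zero]
  exact ellKIntegrand_zero_le hk.le hξ

lemma ellK_le_pi_div_two_div (hk : k ^ 2 < 1) : ellK k ≤ π / 2 / √(1 - k ^ 2) := by
  rw [← integral_one_div_sqrt_one_sub_sq, ← intervalIntegral.integral_div, ellK_eq_integral]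
  refine integral_mono_on zero_le_one (intervalIntegrable_ellKIntegrand hk)
    (intervalIntegrable_one_div_sqrt_one_sub_sq.div_const _) fun ξ hξ => ?_
  rw [← ellKIntegrand_zero]
  exact ellKIntegrand_le hk hξ

lemma tendsto_ellK_zero : Tendsto ellK (𝓝 0) (𝓝 (π / 2)) := by
  have hupper : Tendsto (fun k : ℝ => π / 2 / √(1 - k ^ 2)) (𝓝 0) (𝓝 (π / 2)) := by
    have : ContinuousAt (fun k : ℝ => π / 2 / √(1 - k ^ 2)) 0 := by fun_prop (disch := simp)
    simpa using this.tendsto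
  have hk : ∀ᶠ k : ℝ in 𝓝 0, k ^ 2 < 1 := by
    simpa using ((continuous_pow 2).tendsto (0:ℝ)).eventually
      (eventually_lt_nhds (by norm_num : (0:ℝ) ^ 2 < 1))
  exact tendsto_of_tendsto_of_tendsto_of_le_of_le' tendsto_const_nhds hupper
    (hk.mono fun _ => pi_div_two_le_ellK) (hk.mono fun _ => ellK_le_pi_div_two_div)

lemma integral_mul_ellKIntegrand_le_ellK (hk0 : 0 < k) (hk1 : k < 1) :
    ∫ ξ in (0:ℝ)..1, ξ * ellKIntegrand k ξ ≤ ellK k := by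
  refine integral_mono_on zero_le_one (intervalIntegrable_mul_ellKIntegrand hk0 hk1)
    (intervalIntegrable_ellKIntegrand (by nlinarith)) fun ξ hξ => ?_
  exact mul_le_of_le_one_left (ellKIntegrand_nonneg k ξ) hξ.2

lemma ellK_le_integral_mul_ellKIntegrand_add_one (hk0 : 0 < k) (hk1 : k < 1) :
    ellK k ≤ (∫ ξ in (0:ℝ)..1, ξ * ellKIntegrand k ξ) + 1 := by
  have hint := intervalIntegrable_mul_ellKIntegrand hk0 hk1
  calc ellK k ≤ ∫ ξ in (0:ℝ)..1, (ξ * ellKIntegrand k ξ + 1) := by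
        refine integral_mono_on zero_le_one (intervalIntegrable_ellKIntegrand (by nlinarith))
          (hint.add intervalIntegrable_const) fun ξ hξ => ?_
        show ellKIntegrand k ξ ≤ _
        linarith [sub_mul_ellKIntegrand_le_one (by nlinarith) hξ]
    _ = (∫ ξ in (0:ℝ)..1, ξ * ellKIntegrand k ξ) + 1 := by
        rw [integral_add hint intervalIntegrable_const]
        simp

end Bounds

lemma ellK_sqrt_one_sub_sq_mem_Icc {r : ℝ} (hr0 : 0 < r) (hr1 : r < 1) :
    ellK √(1 - r ^ 2) ∈
      Icc ((log (1 + √(1 - r ^ 2)) - log r) / √(1 - r ^ 2))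
        ((log (1 + √(1 - r ^ 2)) - log r) / √(1 - r ^ 2) + 1) := by
  have hk0 : 0 < √(1 - r ^ 2) := sqrt_pos.2 (by nlinarith)
  have hk1 : √(1 - r ^ 2) < 1 := (sqrt_lt' one_pos).2 (by nlinarith)
  have hk' : √(1 - √(1 - r ^ 2) ^ 2) = r := by
    rw [sq_sqrt (by nlinarith), sub_sub_cancel, sqrt_sq hr0.le]
  have hI := integral_mul_ellKIntegrand hk0 hk1
  rw [hk'] at hI
  exact ⟨hI ▸ integral_mul_ellKIntegrand_le_ellK hk0 hk1,
    hI ▸ ellK_le_integral_mul_ellKIntegrand_add_one hk0 hk1⟩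

lemma tendsto_ellK_sqrt_one_sub_sq_div_neg_log :
    Tendsto (fun r => ellK √(1 - r ^ 2) / -log r) (𝓝[>] 0) (𝓝 1) := by
  have hL : Tendsto (fun r => -log r) (𝓝[>] 0) atTop :=
    tendsto_neg_atBot_atTop.comp tendsto_log_nhdsGT_zero
  have hLinv : Tendsto (fun r => (-log r)⁻¹) (𝓝[>] 0) (𝓝 0) := hL.inv_tendsto_atTop
  have hk : Tendsto (fun r : ℝ => √(1 - r ^ 2)) (𝓝[>] 0) (𝓝 1) := by
    have : Continuous fun r : ℝ => √(1 - r ^ 2) := by fun_prop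
    simpa using this.tendsto 0 |>.mono_left nhdsWithin_le_nhds
  have hlog : Tendsto (fun r => log (1 + √(1 - r ^ 2))) (𝓝[>] 0) (𝓝 (log 2)) := by
    have : ContinuousAt (fun r : ℝ => log (1 + √(1 - r ^ 2))) 0 := by
      fun_prop (disch := positivity)
    convert this.tendsto.mono_left nhdsWithin_le_nhds using 2
    norm_num [one_add_one_eq_two]
  have hlower : Tendsto (fun r => (log (1 + √(1 - r ^ 2)) * (-log r)⁻¹ + 1) / √(1 - r ^ 2))
      (𝓝[>] 0) (𝓝 1) := by
    have := ((hlog.mul hLinv).add_const 1).div hk one_ne_zero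
    rwa [mul_zero, zero_add, div_one] at this
  have hupper := hlower.add hLinv
  rw [add_zero] at hupper
  refine tendsto_of_tendsto_of_tendsto_of_le_of_le' hlower hupper ?_ ?_
  all_goals
    filter_upwards [Ioo_mem_nhdsGT one_pos] with r ⟨hr0, hr1⟩
    have hLpos : 0 < -log r := neg_pos.2 (log_neg hr0 hr1)
    have hL0 : log r ≠ 0 := (log_neg hr0 hr1).ne
    have hbounds := ellK_sqrt_one_sub_sq_mem_Icc hr0 hr1
    have hlower_eq : (log (1 + √(1 - r ^ 2)) * (-log r)⁻¹ + 1) / √(1 - r ^ 2) =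
        (log (1 + √(1 - r ^ 2)) - log r) / √(1 - r ^ 2) / -log r := by
      field_simp
      ring
  · rw [hlower_eq]
    gcongr
    exact hbounds.1
  · rw [hlower_eq, ← one_div, ← add_div]
    gcongr
    exact hbounds.2

theorem ellK_ratio_asymp_zero :
    Tendsto
      (fun r : ℝ => (ellK (Real.sqrt (1 - r ^ 2)) / ellK r) / ((2 / Real.pi) * Real.log (1 / r)))
      (nhdsWithin 0 (Set.Ioi (0:ℝ))) (nhds 1) := by
  have hK : Tendsto (fun r => 2 / π * ellK r) (𝓝[>] 0) (𝓝 1) := by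
    have := (tendsto_ellK_zero.mono_left (nhdsWithin_le_nhds (s := Ioi 0))).const_mul (2 / π)
    rwa [div_mul_div_cancel₀ pi_ne_zero, div_self two_ne_zero] at this
  have h := tendsto_ellK_sqrt_one_sub_sq_div_neg_log.div hK one_ne_zero
  rw [div_one] at h
  refine h.congr fun r => ?_
  rw [Pi.div_apply, one_div, log_inv]
  ring
end

section
/- Let 0 < α, β with α + β < 2π, α < π, β < π, sin α > 0 and sin β > 0. If l is defined by l = (√(1-cos(α+β)) − √(2 sin α sin β)) / (√(1-cos(α+β)) + √(2 sin α sin β)), then the cross-ratio identity (−1/l+1)/(−1/l−1) · (1/l−1)/(1/l+1) = (e^{iβ}−e^{−iβ})/(e^{iβ}−e^{−iα}) · (e^{iα}−e^{−iα})/(e^{iα}−e^{−iβ}) holds, where the right-hand side is a complex cross-ratio of points on the unit circle (which is in fact real). -/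
open Real Complex

/-!
Both sides are algebraic identities in disguise. With `m = 1/l`, the left side is
`((m - 1)/(m + 1))^2 = ((1 - l)/(1 + l))^2`, and writing `l = (s - t)/(s + t)` for the two square
roots gives `(t/s)^2 = 2 sin α sin β / (1 - cos (α + β))`. On the right, the numerator is
`(2i sin β)(2i sin α)` and the denominator multiplies out to `2 cos (α + β) - 2`.
-/

theorem neg_inv_crossRatio_eq_sq {K : Type*} [Field K] (x : K) :
    ((-1 / x + 1) / (-1 / x - 1)) * ((1 / x - 1) / (1 / x + 1)) = ((1 - x) / (1 + x)) ^ 2 := by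
  rcases eq_or_ne x 0 with rfl | hx
  · norm_num
  rcases eq_or_ne (1 + x) 0 with h | h
  · obtain rfl : x = -1 := by linear_combination h
    norm_num
  have h' : -1 - x ≠ 0 := fun h0 => h (by linear_combination -h0)
  field_simp
  ring

theorem one_sub_div_one_add_sub_div_add {K : Type*} [Field K] [NeZero (2 : K)] {s t : K}
    (h : s + t ≠ 0) : (1 - (s - t) / (s + t)) / (1 + (s - t) / (s + t)) = t / s := by
  rw [one_sub_div h, one_add_div h, div_div_div_cancel_right₀ h]
  rw [show s + t - (s - t) = 2 * t by ring, show s + t + (s - t) = 2 * s by ring]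
  exact mul_div_mul_left _ _ (NeZero.ne 2)

theorem Complex.exp_mul_I_sub_exp_neg_mul_I (z : ℂ) :
    exp (z * I) - exp (-z * I) = 2 * sin z * I := by
  rw [two_sin]; ring_nf; rw [I_sq]; ring

theorem Complex.exp_sub_exp_mul_exp_sub (a b : ℂ) :
    (exp (b * I) - exp (-a * I)) * (exp (a * I) - exp (-b * I)) = 2 * cos (a + b) - 2 := by
  rw [two_cos]
  simp only [neg_mul, exp_neg, add_mul, exp_add]
  have ha := exp_ne_zero (a * I)
  have hb := exp_ne_zero (b * I)
  field_simp
  ring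

theorem Complex.exp_mul_I_crossRatio (a b : ℂ) :
    ((exp (b * I) - exp (-b * I)) / (exp (b * I) - exp (-a * I))) *
      ((exp (a * I) - exp (-a * I)) / (exp (a * I) - exp (-b * I))) =
      2 * sin a * sin b / (1 - cos (a + b)) := by
  rw [div_mul_div_comm, exp_sub_exp_mul_exp_sub, exp_mul_I_sub_exp_neg_mul_I,
    exp_mul_I_sub_exp_neg_mul_I]
  calc 2 * sin b * I * (2 * sin a * I) / (2 * cos (a + b) - 2)
      = -2 * (2 * sin a * sin b) / (-2 * (1 - cos (a + b))) := by ring_nf; rw [I_sq]; ring_nf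
    _ = _ := mul_div_mul_left _ _ (by norm_num)

theorem crossRatio_identity_general (α β : ℝ)
    (hsα : 0 < Real.sin α) (hsβ : 0 < Real.sin β)
    (l : ℝ)
    (hl : l = (Real.sqrt (1 - Real.cos (α + β)) - Real.sqrt (2 * Real.sin α * Real.sin β)) /
              (Real.sqrt (1 - Real.cos (α + β)) + Real.sqrt (2 * Real.sin α * Real.sin β))) :
    ((-1 / (l : ℂ) + 1) / (-1 / (l : ℂ) - 1)) * ((1 / (l : ℂ) - 1) / (1 / (l : ℂ) + 1)) =
      ((Complex.exp (β * Complex.I) - Complex.exp (-β * Complex.I)) /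
        (Complex.exp (β * Complex.I) - Complex.exp (-α * Complex.I))) *
      ((Complex.exp (α * Complex.I) - Complex.exp (-α * Complex.I)) /
        (Complex.exp (α * Complex.I) - Complex.exp (-β * Complex.I))) := by
  set s := Real.sqrt (1 - Real.cos (α + β))
  set t := Real.sqrt (2 * Real.sin α * Real.sin β)
  have ht : 0 < t := Real.sqrt_pos.2 (by positivity)
  have hst : s + t ≠ 0 := by positivity
  have hratio : (1 - l) / (1 + l) = t / s := hl ▸ one_sub_div_one_add_sub_div_add hst
  have hs2 : s ^ 2 = 1 - Real.cos (α + β) := Real.sq_sqrt (by linarith [Real.cos_le_one (α + β)])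
  have ht2 : t ^ 2 = 2 * Real.sin α * Real.sin β := Real.sq_sqrt (by positivity)
  rw [neg_inv_crossRatio_eq_sq, exp_mul_I_crossRatio]
  calc ((1 - (l : ℂ)) / (1 + l)) ^ 2 = (((t / s) ^ 2 : ℝ) : ℂ) := by rw [← hratio]; push_cast; rfl
    _ = _ := by rw [div_pow, hs2, ht2]; push_cast; rfl

theorem crossRatio_identity (α β : ℝ) (hα : 0 < α) (hβ : 0 < β)
    (hαπ : α < Real.pi) (hβπ : β < Real.pi) (hsum : α + β < 2 * Real.pi)
    (hsα : 0 < Real.sin α) (hsβ : 0 < Real.sin β)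
    (l : ℝ)
    (hl : l = (Real.sqrt (1 - Real.cos (α + β)) - Real.sqrt (2 * Real.sin α * Real.sin β)) /
              (Real.sqrt (1 - Real.cos (α + β)) + Real.sqrt (2 * Real.sin α * Real.sin β))) :
    ((-1 / (l : ℂ) + 1) / (-1 / (l : ℂ) - 1)) * ((1 / (l : ℂ) - 1) / (1 / (l : ℂ) + 1)) =
      ((Complex.exp (β * Complex.I) - Complex.exp (-β * Complex.I)) /
        (Complex.exp (β * Complex.I) - Complex.exp (-α * Complex.I))) *
      ((Complex.exp (α * Complex.I) - Complex.exp (-α * Complex.I)) /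
        (Complex.exp (α * Complex.I) - Complex.exp (-β * Complex.I))) :=
  crossRatio_identity_general α β hsα hsβ l hl
end
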